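/- arXiv:1107.3500 — 4 statements merged into one kernel-verified Lean document; each statement's English description precedes it below -/
import Mathlib

section
/- Let 0 ≤ κ₀ ≤ 1 and 0 ≤ κ₁ ≤ 1 with κ₀ ≠ κ₁, and define γ = (√κ₀ − √κ₁)², ω = (κ₀ + κ₁ + 2)/2 − 2√(κ₀κ₁) − √((1−κ₀)(1−κ₁)), and the threshold energy n_th = 2·ln 2 / (2 − κ₀ − κ₁ − 2√((1−κ₀)(1−κ₁))). Then for every real n > n_th one has e^{−ωn}/2 < (1 − √(1 − e^{−γn}))/2; that is, above the threshold energy the quantum Bhattacharyya bound is strictly smaller than the classical discrimination bound. -/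
/-!
Writing `D = (√(1-κ₀) - √(1-κ₁))²` for the denominator of `n_th`, one has `ω = γ + D/2`, so
`e^{-ωn} = e^{-γn} · e^{-Dn/2}`, and `n > n_th` says exactly `e^{-Dn/2} < 1/2`. Hence
`e^{-ωn} < x/2` with `x = e^{-γn} ≤ 1`, and `y < x/2` implies `y < 1 - √(1-x)` because
`(1 - y)² > 1 - 2y > 1 - x`.
-/

open Real

namespace Real

theorem sub_sqrt_sub_sqrt_sq {a b : ℝ} (ha : 0 ≤ a) (hb : 0 ≤ b) :
    (√a - √b) ^ 2 = a + b - 2 * √(a * b) := by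
  rw [sqrt_mul ha]
  linear_combination sq_sqrt ha + sq_sqrt hb

theorem sub_sqrt_sub_sqrt_sq_pos {a b : ℝ} (ha : 0 ≤ a) (hb : 0 ≤ b) (hab : a ≠ b) :
    0 < (√a - √b) ^ 2 := by
  have : √a - √b ≠ 0 := sub_ne_zero.mpr fun h => hab ((sqrt_inj ha hb).mp h)
  positivity

theorem lt_one_sub_sqrt_one_sub {x y : ℝ} (hx : x ≤ 1) (hy : y < x / 2) :
    y < 1 - √(1 - x) := by
  have hsqrt : √(1 - x) < 1 - y := by
    rw [sqrt_lt' (by linarith)]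
    nlinarith [sq_nonneg y]
  linarith

theorem exp_neg_lt_half {t : ℝ} (ht : log 2 < t) : exp (-t) < 1 / 2 := by
  calc exp (-t) < exp (-log 2) := exp_lt_exp.mpr (neg_lt_neg ht)
    _ = 1 / 2 := by rw [exp_neg, exp_log two_pos, one_div]

end Real

theorem exp_neg_add_half_mul_lt_one_sub_sqrt {γ D n : ℝ} (hγn : 0 ≤ γ * n)
    (hDn : 2 * log 2 < D * n) :
    exp (-((γ + D / 2) * n)) / 2 < (1 - √(1 - exp (-(γ * n)))) / 2 := by
  have hx : exp (-(γ * n)) ≤ 1 := exp_le_one_iff.mpr (neg_nonpos.mpr hγn)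
  have hsplit : exp (-((γ + D / 2) * n)) = exp (-(γ * n)) * exp (-(D / 2 * n)) := by
    rw [← exp_add]; ring_nf
  have hhalf : exp (-(D / 2 * n)) < 1 / 2 := exp_neg_lt_half (by linarith)
  have hy : exp (-((γ + D / 2) * n)) < exp (-(γ * n)) / 2 := by
    rw [hsplit]
    nlinarith [exp_pos (-(γ * n))]
  exact div_lt_div_of_pos_right (lt_one_sub_sqrt_one_sub hx hy) two_pos

/-- Above the threshold energy `n_th`, the quantum Bhattacharyya bound `e^{−ωn}/2`
for the EPR transmitter is strictly smaller than the classical discrimination bound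
`(1 − √(1 − e^{−γn}))/2`. -/
theorem stmt1 (κ₀ κ₁ : ℝ) (h₀ : 0 ≤ κ₀) (h₀' : κ₀ ≤ 1) (h₁ : 0 ≤ κ₁) (h₁' : κ₁ ≤ 1)
    (hne : κ₀ ≠ κ₁)
    (γ ω nth : ℝ)
    (hγ : γ = (Real.sqrt κ₀ - Real.sqrt κ₁) ^ 2)
    (hω : ω = (κ₀ + κ₁ + 2) / 2 - 2 * Real.sqrt (κ₀ * κ₁)
        - Real.sqrt ((1 - κ₀) * (1 - κ₁)))
    (hnth : nth = 2 * Real.log 2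
        / (2 - κ₀ - κ₁ - 2 * Real.sqrt ((1 - κ₀) * (1 - κ₁)))) :
    ∀ n : ℝ, n > nth →
      Real.exp (-(ω * n)) / 2 < (1 - Real.sqrt (1 - Real.exp (-(γ * n)))) / 2 := by
  intro n hn
  have h₀'' : 0 ≤ 1 - κ₀ := sub_nonneg.mpr h₀'
  have h₁'' : 0 ≤ 1 - κ₁ := sub_nonneg.mpr h₁'
  set D := (√(1 - κ₀) - √(1 - κ₁)) ^ 2 with hD
  have hDpos : 0 < D := sub_sqrt_sub_sqrt_sq_pos h₀'' h₁'' (by contrapose! hne; linarith)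
  rw [sub_sqrt_sub_sqrt_sq h₀'' h₁''] at hD
  have hωγ : ω = γ + D / 2 := by
    rw [hω, hγ, sub_sqrt_sub_sqrt_sq h₀ h₁, hD]; ring
  have hnth' : nth = 2 * log 2 / D := by rw [hnth, hD]; ring_nf
  have hnthpos : 0 < nth := by rw [hnth']; positivity
  have hnpos : 0 < n := hnthpos.trans hn
  have hDn : 2 * log 2 < D * n := by
    rw [hnth', gt_iff_lt, div_lt_iff₀ hDpos] at hn; linarith
  have hγn : 0 ≤ γ * n := mul_nonneg (hγ ▸ sq_nonneg _) hnpos.le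
  rw [hωγ]
  exact exp_neg_add_half_mul_lt_one_sub_sqrt hγn hDn
end

section
/- Let 0 ≤ κ₀ < 1 (ideal memory, i.e. κ₁ = 1) and set a = 1 − √κ₀ ∈ (0,1]. Then for every real n > 1/2 one has e^{−2na}/2 < (1 − √(1 − e^{−na²}))/2; equivalently, 2·e^{−2na} − e^{−4na} < e^{−na²}. That is, for ideal memories the improved quantum bound θ = e^{−2n(1−√κ₀)}/2 beats the classical discrimination bound whenever the signal energy exceeds the threshold n_th = 1/2. -/
/-! With `t = n a` the claim reads `2e^{-2t} - e^{-4t} < e^{-a t}` for `0 < a ≤ 1` and `a < 2t`,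
and the right side only gets smaller as `a` grows, so `a = min (2t) 1` is the worst case.
For `t ≤ 1/2` this is `2e^{-2t} - e^{-4t} ≤ e^{-2t²}`, i.e. `2 ≤ e^{s - s²/2} + e^{-s}` for
`s = 2t ∈ [0, 1]`, which Taylor bounds of both exponentials settle. For `t ≥ 1/2`, with
`u = e^{-t}` it is `0 < u (1 - u) (1 - u - u²)`, which holds since `u ≤ e^{-1/2}` lies below
the golden-ratio root of `u + u² = 1`. The comparison with the classical bound then follows from
`1 - e^{-n a²} < (1 - e^{-2na})²`. -/

open Real

lemma two_le_exp_add_exp_neg {s : ℝ} (hs₀ : 0 ≤ s) (hs₁ : s ≤ 1) :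
    2 ≤ exp (s - s ^ 2 / 2) + exp (-s) := by
  have hpos : 1 + (s - s ^ 2 / 2) + (s - s ^ 2 / 2) ^ 2 / 2 + (s - s ^ 2 / 2) ^ 3 / 6
      ≤ exp (s - s ^ 2 / 2) := by
    have := sum_le_exp_of_nonneg (x := s - s ^ 2 / 2) (by nlinarith) 4
    simpa [Finset.sum_range_succ, Nat.factorial] using this
  have hneg : 1 - s + s ^ 2 / 2 - s ^ 3 / 6 + s ^ 4 / 24 - s ^ 5 / 100 ≤ exp (-s) := by
    -- the Lagrange-type remainder of `exp_bound` for `n = 5` is `s⁵ · 6 / (5! · 5) = s⁵ / 100`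
    have h := exp_bound (x := -s) (by rwa [abs_neg, abs_of_nonneg hs₀]) (n := 5) (by norm_num)
    rw [abs_neg, abs_of_nonneg hs₀] at h
    norm_num [Finset.sum_range_succ, Nat.factorial] at h
    linarith [(abs_le.1 h).1]
  nlinarith [mul_nonneg (pow_nonneg hs₀ 3) (sub_nonneg.2 hs₁),
    mul_nonneg (pow_nonneg hs₀ 4) (sub_nonneg.2 hs₁),
    mul_nonneg (pow_nonneg hs₀ 5) (sub_nonneg.2 hs₁),
    mul_nonneg (pow_nonneg hs₀ 2) (mul_self_nonneg (1 - s))]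

lemma exp_neg_add_sq_lt_one {t : ℝ} (ht : 1 / 2 ≤ t) : exp (-t) + exp (-t) ^ 2 < 1 := by
  have hhalf : 79 / 48 ≤ exp (1 / 2) := by
    have := sum_le_exp_of_nonneg (x := 1 / 2) (by norm_num) 4
    norm_num [Finset.sum_range_succ, Nat.factorial] at this
    linarith
  have hu : exp (-t) ≤ 48 / 79 := by
    rw [exp_neg, inv_le_comm₀ (exp_pos t) (by norm_num)]
    calc (48 / 79 : ℝ)⁻¹ = 79 / 48 := by norm_num
      _ ≤ exp (1 / 2) := hhalf
      _ ≤ exp t := exp_le_exp.2 ht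
  nlinarith [exp_pos (-t)]

lemma two_mul_exp_neg_sub_exp_neg_le_of_le_half {t : ℝ} (ht₀ : 0 ≤ t) (ht₁ : t ≤ 1 / 2) :
    2 * exp (-(2 * t)) - exp (-(4 * t)) ≤ exp (-(2 * t ^ 2)) := by
  have h := two_le_exp_add_exp_neg (s := 2 * t) (by positivity) (by linarith)
  have hsplit : exp (-(2 * t ^ 2)) + exp (-(4 * t))
      = exp (-(2 * t)) * (exp (2 * t - (2 * t) ^ 2 / 2) + exp (-(2 * t))) := by
    rw [mul_add, ← exp_add, ← exp_add]; ring_nf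
  nlinarith [exp_pos (-(2 * t))]

lemma two_mul_exp_neg_sub_exp_neg_lt_of_half_le {t : ℝ} (ht : 1 / 2 ≤ t) :
    2 * exp (-(2 * t)) - exp (-(4 * t)) < exp (-t) := by
  have hu₀ := exp_pos (-t)
  have hu₁ : exp (-t) < 1 := exp_lt_one_iff.2 (by linarith)
  have hφ := exp_neg_add_sq_lt_one ht
  have h2 : exp (-(2 * t)) = exp (-t) ^ 2 := by rw [← exp_nat_mul]; ring_nf
  have h4 : exp (-(4 * t)) = exp (-t) ^ 4 := by rw [← exp_nat_mul]; ring_nf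
  rw [h2, h4]
  -- `u - 2u² + u⁴ = u (1 - u) (1 - u - u²)`
  nlinarith [mul_pos (mul_pos hu₀ (sub_pos.2 hu₁)) (by linarith : 0 < 1 - exp (-t) - exp (-t) ^ 2)]

lemma two_mul_exp_neg_sub_exp_neg_lt {a t : ℝ} (ha₀ : 0 < a) (ha₁ : a ≤ 1) (hat : a < 2 * t) :
    2 * exp (-(2 * t)) - exp (-(4 * t)) < exp (-(a * t)) := by
  have ht : 0 < t := by linarith
  rcases le_or_gt t (1 / 2) with hsmall | hlarge
  · calc _ ≤ exp (-(2 * t ^ 2)) := two_mul_exp_neg_sub_exp_neg_le_of_le_half ht.le hsmall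
      _ < exp (-(a * t)) := exp_lt_exp.2 (by nlinarith)
  · calc _ < exp (-t) := two_mul_exp_neg_sub_exp_neg_lt_of_half_le hlarge.le
      _ ≤ exp (-(a * t)) := exp_le_exp.2 (by nlinarith)

lemma lt_one_sub_sqrt_one_sub {x y : ℝ} (hx : x < 1) (h : 2 * x - x ^ 2 < y) :
    x / 2 < (1 - √(1 - y)) / 2 := by
  have : √(1 - y) < 1 - x := (sqrt_lt' (by linarith)).2 (by nlinarith)
  linarith

theorem stmt2_general (κ₀ : ℝ) (h₀' : κ₀ < 1)
    (a : ℝ) (ha : a = 1 - Real.sqrt κ₀) :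
    (0 < a ∧ a ≤ 1) ∧
    ∀ n : ℝ, n > 1 / 2 →
      Real.exp (-(2 * n * a)) / 2
          < (1 - Real.sqrt (1 - Real.exp (-(n * a ^ 2)))) / 2
        ∧ 2 * Real.exp (-(2 * n * a)) - Real.exp (-(4 * n * a))
            < Real.exp (-(n * a ^ 2)) := by
  have hsqrt : √κ₀ < 1 := (sqrt_lt' one_pos).2 (by linarith)
  have ha₀ : 0 < a := by linarith
  have ha₁ : a ≤ 1 := by linarith [sqrt_nonneg κ₀]
  refine ⟨⟨ha₀, ha₁⟩, fun n hn => ?_⟩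
  have hbound : 2 * exp (-(2 * n * a)) - exp (-(4 * n * a)) < exp (-(n * a ^ 2)) := by
    have := two_mul_exp_neg_sub_exp_neg_lt ha₀ ha₁ (t := n * a) (by nlinarith)
    rwa [show 2 * (n * a) = 2 * n * a by ring, show 4 * (n * a) = 4 * n * a by ring,
      show a * (n * a) = n * a ^ 2 by ring] at this
  refine ⟨lt_one_sub_sqrt_one_sub (exp_lt_one_iff.2 (by nlinarith)) ?_, hbound⟩
  have hsq : exp (-(4 * n * a)) = exp (-(2 * n * a)) ^ 2 := by rw [← exp_nat_mul]; ring_nf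
  rwa [hsq] at hbound

/-- For ideal memories (`κ₁ = 1`), the improved quantum bound `θ = e^{−2n(1−√κ₀)}/2`
beats the classical discrimination bound `(1 − √(1 − e^{−n(1−√κ₀)²}))/2`
whenever the signal energy exceeds `n_th = 1/2`; equivalently
`2 e^{−2na} − e^{−4na} < e^{−na²}` where `a = 1 − √κ₀`. -/
theorem stmt2 (κ₀ : ℝ) (h₀ : 0 ≤ κ₀) (h₀' : κ₀ < 1)
    (a : ℝ) (ha : a = 1 - Real.sqrt κ₀) :
    (0 < a ∧ a ≤ 1) ∧
    ∀ n : ℝ, n > 1 / 2 →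
      Real.exp (-(2 * n * a)) / 2
          < (1 - Real.sqrt (1 - Real.exp (-(n * a ^ 2)))) / 2
        ∧ 2 * Real.exp (-(2 * n * a)) - Real.exp (-(4 * n * a))
            < Real.exp (-(n * a ^ 2)) :=
  stmt2_general κ₀ h₀' a ha
end

section
/- Let H₂(x) = −x·log₂ x − (1−x)·log₂(1−x) (with 0·log₂ 0 = 0) denote the binary Shannon entropy. Fix p ∈ [0,1] and γ ≥ 0, and for n ≥ 0 define ξ(n) = 1/2 + (1/2)·√(1 − 4p(1−p)(1 − e^{−γn})). Then the function n ↦ H₂(ξ(n)) is concave on [0, ∞). -/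
open Real

/-!
The function is `g ∘ u` with `g(v) = H₂(1/2 + √v/2)` and `u(n) = 1 − q + q e^{−γn}`,
`q = 4p(1−p) ∈ [0, 1]`. The inner map `u` is convex with values in `[0, 1]`, and `g` is
antitone and concave on `[0, 1]`, so `g ∘ u` is concave. With `s = √v`, one computes
`g''(v) = ((log(1+s) − log(1−s))(1−s²) − 2s) / (8 s³ (1−s²) log 2)`, whose numerator is
nonpositive because `log t ≤ sinh (log t) = (t − t⁻¹)/2` for `t = (1+s)/(1−s) ≥ 1`.
-/

/-- The binary Shannon entropy `H₂(x) = −x log₂ x − (1−x) log₂(1−x)`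
(with the convention `0·log₂ 0 = 0`, automatic since `logb 2 0 = 0`). -/
noncomputable def binEnt (x : ℝ) : ℝ := -x * Real.logb 2 x - (1 - x) * Real.logb 2 (1 - x)

theorem ConcaveOn.comp_convexOn_of_mapsTo {𝕜 E β α : Type*} [Semiring 𝕜] [PartialOrder 𝕜]
    [AddCommMonoid E] [AddCommMonoid α] [PartialOrder α] [AddCommMonoid β] [PartialOrder β]
    [SMul 𝕜 E] [SMul 𝕜 α] [SMul 𝕜 β] {s : Set E} {t : Set β} {f : E → β} {g : β → α}
    (hg : ConcaveOn 𝕜 t g) (hf : ConvexOn 𝕜 s f) (hst : Set.MapsTo f s t)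
    (hg' : AntitoneOn g t) : ConcaveOn 𝕜 s (g ∘ f) :=
  ⟨hf.1, fun _ hx _ hy _ _ ha hb hab =>
    (hg.2 (hst hx) (hst hy) ha hb hab).trans <|
      hg' (hst <| hf.1 hx hy ha hb hab) (hg.1 (hst hx) (hst hy) ha hb hab) <|
        hf.2 hx hy ha hb hab⟩

theorem Real.log_le_sub_inv_div_two {t : ℝ} (ht : 1 ≤ t) : log t ≤ (t - t⁻¹) / 2 := by
  rw [← sinh_log (by linarith)]
  exact self_le_sinh_iff.2 (log_nonneg ht)

theorem Real.log_one_add_sub_log_one_sub_mul_le {s : ℝ} (hs0 : 0 ≤ s) (hs1 : s < 1) :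
    (log (1 + s) - log (1 - s)) * (1 - s ^ 2) ≤ 2 * s := by
  have hm : 0 < 1 - s := by linarith
  have h := log_le_sub_inv_div_two ((one_le_div hm).2 (by linarith : 1 - s ≤ 1 + s))
  rw [log_div (by linarith) hm.ne', inv_div] at h
  have hsq : 0 < 1 - s ^ 2 := by nlinarith
  calc (log (1 + s) - log (1 - s)) * (1 - s ^ 2)
      ≤ ((1 + s) / (1 - s) - (1 - s) / (1 + s)) / 2 * (1 - s ^ 2) := by gcongr
    _ = 2 * s := by field_simp; ring

theorem binEnt_eq_div_log_two :
    binEnt = fun x => (-(x * log x) - (1 - x) * log (1 - x)) / log 2 := by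
  funext x
  rw [binEnt, ← log_div_log, ← log_div_log]
  ring

theorem continuous_binEnt : Continuous binEnt := by
  rw [binEnt_eq_div_log_two]
  exact (continuous_mul_log.neg.sub
    (continuous_mul_log.comp (continuous_const.sub continuous_id))).div_const _

theorem hasDerivAt_binEnt {x : ℝ} (h0 : x ≠ 0) (h1 : x ≠ 1) :
    HasDerivAt binEnt ((log (1 - x) - log x) / log 2) x := by
  have hb : HasDerivAt (fun y => (1 - y) * log (1 - y)) ((log (1 - x) + 1) * (-1)) x :=
    (hasDerivAt_mul_log (sub_ne_zero.2 h1.symm)).comp x ((hasDerivAt_id x).const_sub 1)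
  rw [binEnt_eq_div_log_two]
  exact (((hasDerivAt_mul_log h0).neg.sub hb).div_const (log 2)).congr_deriv (by ring)

noncomputable def binEntSqrt (u : ℝ) : ℝ := binEnt (1 / 2 + 1 / 2 * √u)

noncomputable def binEntSqrtDeriv (u : ℝ) : ℝ :=
  -(log (1 + √u) - log (1 - √u)) / (4 * √u * log 2)

noncomputable def binEntSqrtDeriv2 (u : ℝ) : ℝ :=
  ((log (1 + √u) - log (1 - √u)) * (1 - u) - 2 * √u) / (8 * u * √u * (1 - u) * log 2)

theorem continuous_binEntSqrt : Continuous binEntSqrt :=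
  continuous_binEnt.comp (by fun_prop)

theorem hasDerivAt_binEntSqrt {u : ℝ} (hu0 : 0 < u) (hu1 : u < 1) :
    HasDerivAt binEntSqrt (binEntSqrtDeriv u) u := by
  have hs0 : 0 < √u := sqrt_pos.2 hu0
  have hs1 : √u < 1 := (sqrt_lt' one_pos).2 (by linarith)
  have h := (hasDerivAt_binEnt (x := 1 / 2 + 1 / 2 * √u) (by linarith) (by linarith)).comp u
    (((hasDerivAt_sqrt hu0.ne').const_mul (1 / 2)).const_add (1 / 2))
  refine h.congr_deriv ?_
  rw [binEntSqrtDeriv, show 1 - (1 / 2 + 1 / 2 * √u) = (1 - √u) / 2 by ring,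
    show (1 / 2 + 1 / 2 * √u : ℝ) = (1 + √u) / 2 by ring,
    log_div (by linarith) two_ne_zero, log_div (by linarith) two_ne_zero]
  field_simp
  ring

theorem hasDerivAt_binEntSqrtDeriv {u : ℝ} (hu0 : 0 < u) (hu1 : u < 1) :
    HasDerivAt binEntSqrtDeriv (binEntSqrtDeriv2 u) u := by
  have hs1 : √u < 1 := (sqrt_lt' one_pos).2 (by linarith)
  have hsqrt := hasDerivAt_sqrt hu0.ne'
  have hL := ((hasDerivAt_log (by positivity)).comp u (hsqrt.const_add 1)).sub
    ((hasDerivAt_log (by linarith)).comp u (hsqrt.const_sub 1))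
  have hD := (hsqrt.const_mul 4).mul_const (log 2)
  refine (hL.neg.div hD (by positivity)).congr_deriv ?_
  obtain ⟨s, hs0, rfl⟩ : ∃ s, 0 < s ∧ u = s ^ 2 := ⟨√u, sqrt_pos.2 hu0, (sq_sqrt hu0.le).symm⟩
  rw [sqrt_sq hs0.le] at hs1
  have : 1 - s ≠ 0 := by linarith
  have : 1 - s ^ 2 ≠ 0 := by nlinarith
  simp only [binEntSqrtDeriv2, Pi.neg_apply, Pi.sub_apply, Function.comp_apply, sqrt_sq hs0.le]
  field_simp
  ring

theorem binEntSqrtDeriv_nonpos {u : ℝ} (hu1 : u < 1) : binEntSqrtDeriv u ≤ 0 := by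
  have hs1 : √u < 1 := (sqrt_lt' one_pos).2 (by linarith)
  have : log (1 - √u) ≤ log (1 + √u) := log_le_log (by linarith) (by linarith [sqrt_nonneg u])
  exact div_nonpos_of_nonpos_of_nonneg (by linarith) (by positivity [log_pos one_lt_two])

theorem binEntSqrtDeriv2_nonpos {u : ℝ} (hu0 : 0 < u) (hu1 : u < 1) :
    binEntSqrtDeriv2 u ≤ 0 := by
  have hs1 : √u < 1 := (sqrt_lt' one_pos).2 (by linarith)
  have key := log_one_add_sub_log_one_sub_mul_le (sqrt_nonneg u) hs1
  rw [sq_sqrt hu0.le] at key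
  have : 0 < 1 - u := by linarith
  exact div_nonpos_of_nonpos_of_nonneg (by linarith) (by positivity [log_pos one_lt_two])

theorem concaveOn_binEntSqrt : ConcaveOn ℝ (Set.Icc 0 1) binEntSqrt := by
  refine concaveOn_of_hasDerivWithinAt2_nonpos (f' := binEntSqrtDeriv) (f'' := binEntSqrtDeriv2)
    (convex_Icc 0 1) continuous_binEntSqrt.continuousOn
    (fun u hu => ?_) (fun u hu => ?_) (fun u hu => ?_) <;>
    obtain ⟨hu0, hu1⟩ : 0 < u ∧ u < 1 := by rwa [interior_Icc] at hu
  · exact (hasDerivAt_binEntSqrt hu0 hu1).hasDerivWithinAt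
  · exact (hasDerivAt_binEntSqrtDeriv hu0 hu1).hasDerivWithinAt
  · exact binEntSqrtDeriv2_nonpos hu0 hu1

theorem antitoneOn_binEntSqrt : AntitoneOn binEntSqrt (Set.Icc 0 1) := by
  refine antitoneOn_of_hasDerivWithinAt_nonpos (f' := binEntSqrtDeriv) (convex_Icc 0 1)
    continuous_binEntSqrt.continuousOn (fun u hu => ?_) (fun u hu => ?_) <;>
    obtain ⟨hu0, hu1⟩ : 0 < u ∧ u < 1 := by rwa [interior_Icc] at hu
  · exact (hasDerivAt_binEntSqrt hu0 hu1).hasDerivWithinAt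
  · exact binEntSqrtDeriv_nonpos hu1

theorem convexOn_one_sub_mul_one_sub_exp {q : ℝ} (hq : 0 ≤ q) (γ : ℝ) :
    ConvexOn ℝ Set.univ (fun n => 1 - q * (1 - exp (-(γ * n)))) := by
  have h : ConvexOn ℝ Set.univ fun n : ℝ => exp (-(γ * n)) :=
    convexOn_exp.comp_linearMap ((-γ) • LinearMap.id) |>.congr fun _ _ => by simp
  exact (h.smul hq).add_const (1 - q) |>.congr fun n _ => by
    simp only [Pi.add_apply, smul_eq_mul]
    ring

theorem mapsTo_one_sub_mul_one_sub_exp {q γ : ℝ} (hq0 : 0 ≤ q) (hq1 : q ≤ 1) (hγ : 0 ≤ γ) :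
    Set.MapsTo (fun n => 1 - q * (1 - exp (-(γ * n)))) (Set.Ici 0) (Set.Icc 0 1) := by
  intro n (hn : 0 ≤ n)
  have he1 : exp (-(γ * n)) ≤ 1 := exp_le_one_iff.2 (by nlinarith)
  have he0 := exp_pos (-(γ * n))
  constructor <;> nlinarith

/-- The Holevo information `H₂(ξ(n))` read per cell by the optimal coherent-state
transmitter, with `ξ(n) = 1/2 + (1/2)√(1 − 4p(1−p)(1 − e^{−γn}))`, is a concave
function of the signal energy `n` on `[0, ∞)`. -/
theorem stmt6 (p : ℝ) (hp : 0 ≤ p) (hp' : p ≤ 1) (γ : ℝ) (hγ : 0 ≤ γ) :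
    ConcaveOn ℝ (Set.Ici (0 : ℝ))
      (fun n : ℝ =>
        binEnt (1 / 2 + (1 / 2) *
          Real.sqrt (1 - 4 * p * (1 - p) * (1 - Real.exp (-(γ * n)))))) := by
  have hq0 : 0 ≤ 4 * p * (1 - p) := mul_nonneg (by positivity) (sub_nonneg.2 hp')
  have hq1 : 4 * p * (1 - p) ≤ 1 := by nlinarith [sq_nonneg (2 * p - 1)]
  exact concaveOn_binEntSqrt.comp_convexOn_of_mapsTo
    ((convexOn_one_sub_mul_one_sub_exp hq0 γ).subset (Set.subset_univ _) (convex_Ici 0))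
    (mapsTo_one_sub_mul_one_sub_exp hq0 hq1 hγ) antitoneOn_binEntSqrt
end

section
/- Let H₂(x) = −x·log₂ x − (1−x)·log₂(1−x) (with 0·log₂ 0 = 0) denote the binary Shannon entropy. Then for every t ∈ [0,1]: H₂((1+t)/2) ≥ 1 − H₂((1 − √(1−t²))/2). Equivalently, for all κ₀, κ₁ ∈ [0,1] and all n ≥ 0, setting γ = (√κ₀ − √κ₁)², the multi-cell classical reading capacity H₂((1 + e^{−γn/2})/2) is at least the single-cell classical bound 1 − H₂((1 − √(1 − e^{−γn}))/2). -/
/-!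
Both sides are controlled by the quadratic lower bound `H₂(p) ≥ 4p(1 - p)`: at `p = (1 + t)/2` it
reads `H₂((1 + t)/2) ≥ 1 - t²`, and at `p = (1 - s)/2` with `s = √(1 - t²)` it reads
`H₂((1 - s)/2) ≥ 1 - s² = t²`; the two add up to `1`.

In nats the quadratic bound says that `g p = binEntropy p - 4 log 2 · p(1 - p)` is nonnegative.
By symmetry it suffices to look at `[1/2, 1]`, where `g` vanishes at both ends, has a critical point
at `1/2`, and `g'' p = 8 log 2 - 1/(p(1 - p))` changes sign once: `g` is convex and then concave.
-/

open Real

open Set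

theorem nonneg_of_convexOn_Icc_of_concaveOn_Icc {f : ℝ → ℝ} {a b c x : ℝ} (hac : a ≤ c)
    (hcb : c ≤ b) (hconv : ConvexOn ℝ (Icc a c) f) (hconc : ConcaveOn ℝ (Icc c b) f)
    (hfa : f a = 0) (hf'a : HasDerivWithinAt f 0 (Ioi a) a) (hfb : 0 ≤ f b) (hx : x ∈ Icc a b) :
    0 ≤ f x := by
  have hleft : ∀ y ∈ Icc a c, 0 ≤ f y := by
    rintro y ⟨hay, hyc⟩
    rcases hay.eq_or_lt with rfl | hay
    · exact hfa.ge
    · have := hconv.le_slope_of_hasDerivWithinAt_Ioi (left_mem_Icc.2 hac) ⟨hay.le, hyc⟩ hay hf'a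
      rwa [slope_def_field, hfa, sub_zero, le_div_iff₀ (sub_pos.2 hay), zero_mul] at this
  rcases le_total x c with hxc | hcx
  · exact hleft x ⟨hx.1, hxc⟩
  · refine (le_min (hleft c (right_mem_Icc.2 hac)) hfb).trans ?_
    exact hconc.ge_on_segment (left_mem_Icc.2 hcb) (right_mem_Icc.2 hcb)
      (segment_eq_Icc hcb ▸ ⟨hcx, hx.2⟩)

lemma hasDerivAt_log_one_sub_sub_log {p : ℝ} (hp₀ : p ≠ 0) (hp₁ : p ≠ 1) :
    HasDerivAt (fun q ↦ log (1 - q) - log q) (-1 / (p * (1 - p))) p := by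
  have h1p : 1 - p ≠ 0 := sub_ne_zero.2 (Ne.symm hp₁)
  refine ((((hasDerivAt_id p).const_sub 1).log h1p).fun_sub
    ((hasDerivAt_id p).log hp₀)).congr_deriv ?_
  simp only [id]
  field_simp
  ring

section BinEntropySubQuadratic

variable {a p : ℝ} {s : Set ℝ}

lemma hasDerivAt_binEntropy_sub_mul (hp₀ : 0 < p) (hp₁ : p < 1) :
    HasDerivAt (fun q ↦ binEntropy q - a * (q * (1 - q)))
      (log (1 - p) - log p - a * (1 - 2 * p)) p :=
  ((hasDerivAt_binEntropy hp₀.ne' hp₁.ne).fun_sub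
    (((hasDerivAt_id p).fun_mul ((hasDerivAt_id p).const_sub 1)).const_mul a)).congr_deriv
    (by simp only [id]; ring)

lemma hasDerivAt_deriv_binEntropy_sub_mul (hp₀ : 0 < p) (hp₁ : p < 1) :
    HasDerivAt (fun q ↦ log (1 - q) - log q - a * (1 - 2 * q)) (2 * a - 1 / (p * (1 - p))) p :=
  ((hasDerivAt_log_one_sub_sub_log hp₀.ne' hp₁.ne).fun_sub
    ((((hasDerivAt_id p).const_mul 2).const_sub 1).const_mul a)).congr_deriv (by ring)

lemma convexOn_binEntropy_sub_mul (hs : Convex ℝ s) (hs₀₁ : interior s ⊆ Ioo 0 1)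
    (h : ∀ q ∈ interior s, 1 ≤ 2 * a * (q * (1 - q))) :
    ConvexOn ℝ s (fun q ↦ binEntropy q - a * (q * (1 - q))) := by
  refine convexOn_of_hasDerivWithinAt2_nonneg hs (by fun_prop)
    (fun q hq ↦ (hasDerivAt_binEntropy_sub_mul (hs₀₁ hq).1 (hs₀₁ hq).2).hasDerivWithinAt)
    (fun q hq ↦ (hasDerivAt_deriv_binEntropy_sub_mul (hs₀₁ hq).1 (hs₀₁ hq).2).hasDerivWithinAt)
    fun q hq ↦ ?_
  obtain ⟨hq₀, hq₁⟩ := hs₀₁ hq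
  rw [sub_nonneg, div_le_iff₀ (by nlinarith)]
  exact h q hq

lemma concaveOn_binEntropy_sub_mul (hs : Convex ℝ s) (hs₀₁ : interior s ⊆ Ioo 0 1)
    (h : ∀ q ∈ interior s, 2 * a * (q * (1 - q)) ≤ 1) :
    ConcaveOn ℝ s (fun q ↦ binEntropy q - a * (q * (1 - q))) := by
  refine concaveOn_of_hasDerivWithinAt2_nonpos hs (by fun_prop)
    (fun q hq ↦ (hasDerivAt_binEntropy_sub_mul (hs₀₁ hq).1 (hs₀₁ hq).2).hasDerivWithinAt)
    (fun q hq ↦ (hasDerivAt_deriv_binEntropy_sub_mul (hs₀₁ hq).1 (hs₀₁ hq).2).hasDerivWithinAt)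
    fun q hq ↦ ?_
  obtain ⟨hq₀, hq₁⟩ := hs₀₁ hq
  rw [sub_nonpos, le_div_iff₀ (by nlinarith)]
  exact h q hq

end BinEntropySubQuadratic

theorem four_mul_log_two_mul_le_binEntropy {p : ℝ} (hp₀ : 0 ≤ p) (hp₁ : p ≤ 1) :
    4 * log 2 * (p * (1 - p)) ≤ binEntropy p := by
  wlog hp : 2⁻¹ ≤ p generalizing p
  · simpa [mul_comm] using this (p := 1 - p) (by linarith) (by linarith) (by linarith)
  have hlog : 1 < 2 * log 2 := by linarith [log_two_gt_d9]
  -- the point where the second derivative `8 log 2 - 1/(q(1 - q))` changes sign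
  obtain ⟨c, ⟨hc₀, hc₁⟩, hc⟩ : ∃ c ∈ Icc (2⁻¹ : ℝ) 1, c * (1 - c) = 1 / (8 * log 2) := by
    refine intermediate_value_Icc' (by norm_num) (by fun_prop) ⟨?_, ?_⟩
    · norm_num; positivity
    · rw [div_le_iff₀ (by positivity)]; norm_num; linarith
  have hc' : 2 * (4 * log 2) * (c * (1 - c)) = 1 := by rw [hc]; field_simp; ring
  have hanti : ∀ q r : ℝ, 2⁻¹ ≤ q → q ≤ r →
      2 * (4 * log 2) * (r * (1 - r)) ≤ 2 * (4 * log 2) * (q * (1 - q)) :=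
    fun q r hq hqr ↦ mul_le_mul_of_nonneg_left (by nlinarith) (by positivity)
  have hconv := convexOn_binEntropy_sub_mul (a := 4 * log 2) (convex_Icc 2⁻¹ c)
    (by rw [interior_Icc]; exact Ioo_subset_Ioo (by norm_num) (by linarith))
    (fun q hq ↦ by rw [interior_Icc] at hq; linarith [hanti q c hq.1.le hq.2.le])
  have hconc := concaveOn_binEntropy_sub_mul (a := 4 * log 2) (convex_Icc c 1)
    (by rw [interior_Icc]; exact Ioo_subset_Ioo (by linarith) le_rfl)
    (fun q hq ↦ by rw [interior_Icc] at hq; linarith [hanti c q hc₀ hq.1.le])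
  have hcrit : HasDerivWithinAt (fun q ↦ binEntropy q - 4 * log 2 * (q * (1 - q))) 0
      (Ioi 2⁻¹) 2⁻¹ := by
    have h : log (1 - 2⁻¹) - log 2⁻¹ - 4 * log 2 * (1 - 2 * 2⁻¹) = 0 := by norm_num
    exact h ▸ (hasDerivAt_binEntropy_sub_mul (by norm_num) (by norm_num)).hasDerivWithinAt
  have := nonneg_of_convexOn_Icc_of_concaveOn_Icc hc₀ hc₁ hconv hconc
    (by simp only [binEntropy_two_inv]; ring) hcrit (by simp) ⟨hp, hp₁⟩
  simpa using this

lemma binEnt_eq_binEntropy_div_log_two (p : ℝ) : binEnt p = binEntropy p / log 2 := by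
  simp only [binEnt, binEntropy, logb, log_inv]
  ring

lemma four_mul_le_binEnt {p : ℝ} (hp₀ : 0 ≤ p) (hp₁ : p ≤ 1) : 4 * (p * (1 - p)) ≤ binEnt p := by
  rw [binEnt_eq_binEntropy_div_log_two, le_div_iff₀ (log_pos one_lt_two), mul_right_comm]
  exact four_mul_log_two_mul_le_binEntropy hp₀ hp₁

lemma one_le_binEnt_add_binEnt_sqrt {t : ℝ} (ht₀ : -1 ≤ t) (ht₁ : t ≤ 1) :
    1 ≤ binEnt ((1 + t) / 2) + binEnt ((1 - √(1 - t ^ 2)) / 2) := by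
  have hs : √(1 - t ^ 2) ^ 2 = 1 - t ^ 2 := sq_sqrt (by nlinarith)
  have hs₁ : √(1 - t ^ 2) ≤ 1 := sqrt_le_one.2 (by nlinarith)
  have h₁ := four_mul_le_binEnt (p := (1 + t) / 2) (by linarith) (by linarith)
  have h₂ := four_mul_le_binEnt (p := (1 - √(1 - t ^ 2)) / 2) (by linarith)
    (by linarith [sqrt_nonneg (1 - t ^ 2)])
  nlinarith

/-- For every `t ∈ [0,1]`, `H₂((1+t)/2) ≥ 1 − H₂((1 − √(1−t²))/2)`; equivalently,
for pure-loss reflectivities `κ₀, κ₁ ∈ [0,1]` and signal energy `n ≥ 0`, with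
`γ = (√κ₀ − √κ₁)²`, the multi-cell classical reading capacity
`H₂((1 + e^{−γn/2})/2)` is at least the single-cell classical bound
`1 − H₂((1 − √(1 − e^{−γn}))/2)`. -/
theorem stmt7 :
    (∀ t : ℝ, 0 ≤ t → t ≤ 1 →
      binEnt ((1 + t) / 2) ≥ 1 - binEnt ((1 - Real.sqrt (1 - t ^ 2)) / 2)) ∧
    (∀ κ₀ κ₁ : ℝ, 0 ≤ κ₀ → κ₀ ≤ 1 → 0 ≤ κ₁ → κ₁ ≤ 1 → ∀ n : ℝ, 0 ≤ n →
      binEnt ((1 + Real.exp (-((Real.sqrt κ₀ - Real.sqrt κ₁) ^ 2 * n) / 2)) / 2)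
        ≥ 1 - binEnt ((1 - Real.sqrt
            (1 - Real.exp (-((Real.sqrt κ₀ - Real.sqrt κ₁) ^ 2 * n)))) / 2)) := by
  refine ⟨fun t ht₀ ht₁ ↦ ?_, fun κ₀ κ₁ _ _ _ _ n hn ↦ ?_⟩
  · linarith [one_le_binEnt_add_binEnt_sqrt (by linarith : -1 ≤ t) ht₁]
  · set x := (√κ₀ - √κ₁) ^ 2 * n
    have hx : 0 ≤ x := by positivity
    have hsq : exp (-x / 2) ^ 2 = exp (-x) := by rw [← exp_nat_mul]; ring_nf
    have := one_le_binEnt_add_binEnt_sqrt (t := exp (-x / 2)) (by linarith [exp_pos (-x / 2)])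
      (exp_le_one_iff.2 (by linarith))
    rw [hsq] at this
    linarith
end
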